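/- arXiv:2007.12518 — 2 statements merged into one kernel-verified Lean document; each statement's English description precedes it below -/
import Mathlib

section
/- For every pair of independent finite binary sequences s and t, the element y_s y_t⁻¹ lies in the group S. -/
/-- The Cantor set of infinite binary sequences. -/
abbrev Cantor : Type := ℕ → Bool

/-- Concatenation of a finite binary sequence with an infinite binary sequence. -/
def cat (s : List Bool) (η : Cantor) : Cantor :=
  fun n => if h : n < s.length then s.get ⟨n, h⟩ else η (n - s.length)

/-- `s` is a (finite) prefix of the infinite sequence `ξ`. -/
def IsPrefixOf (s : List Bool) (ξ : Cantor) : Prop := ∃ η : Cantor, ξ = cat s η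

/-- The group of self-homeomorphisms of a topological space, with
`(f * g) ξ = f (g ξ)` (i.e. in the right-action convention `ξ·(g h) = (ξ·g)·h`,
the product `g * f` corresponds to the word "apply `f`, then `g`"). -/
instance {α : Type*} [TopologicalSpace α] : Group (α ≃ₜ α) where
  mul f g := g.trans f
  one := Homeomorph.refl α
  inv := Homeomorph.symm
  mul_assoc _ _ _ := Homeomorph.ext fun _ => rfl
  one_mul _ := Homeomorph.ext fun _ => rfl
  mul_one _ := Homeomorph.ext fun _ => rfl
  inv_mul_cancel f := Homeomorph.ext fun ξ => f.symm_apply_apply ξ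

@[simp] lemma homeo_mul_apply {α : Type*} [TopologicalSpace α] (f g : α ≃ₜ α) (ξ : α) :
    (f * g) ξ = f (g ξ) := rfl

@[simp] lemma homeo_one_apply {α : Type*} [TopologicalSpace α] (ξ : α) :
    (1 : α ≃ₜ α) ξ = ξ := rfl

@[simp] lemma homeo_inv_apply {α : Type*} [TopologicalSpace α] (f : α ≃ₜ α) (ξ : α) :
    (f⁻¹ : α ≃ₜ α) ξ = f.symm ξ := rfl

/-- The data of the basic homeomorphisms `x`, `y`, `x_s`, `y_s`, `p_n` of the Cantor
set, together with their recursive defining equations. -/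
structure LMData where
  x : Cantor ≃ₜ Cantor
  y : Cantor ≃ₜ Cantor
  xx : List Bool → Cantor ≃ₜ Cantor
  yy : List Bool → Cantor ≃ₜ Cantor
  p : ℕ → Cantor ≃ₜ Cantor
  hx00 : ∀ η, x (cat [false, false] η) = cat [false] η
  hx01 : ∀ η, x (cat [false, true] η) = cat [true, false] η
  hx1 : ∀ η, x (cat [true] η) = cat [true, true] η
  hy00 : ∀ η, y (cat [false, false] η) = cat [false] (y η)
  hy01 : ∀ η, y (cat [false, true] η) = cat [true, false] (y.symm η)
  hy1 : ∀ η, y (cat [true] η) = cat [true, true] (y η)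
  hxx : ∀ s η, xx s (cat s η) = cat s (x η)
  hxx' : ∀ s ξ, ¬ IsPrefixOf s ξ → xx s ξ = ξ
  hyy : ∀ s η, yy s (cat s η) = cat s (y η)
  hyy' : ∀ s ξ, ¬ IsPrefixOf s ξ → yy s ξ = ξ
  hp1 : ∀ n k η, k < n → p n (cat (List.replicate k true ++ [false]) η) =
      cat (List.replicate (k + 1) true ++ [false]) η
  hp2 : ∀ n η, p n (cat (List.replicate n true ++ [false]) η) =
      cat (List.replicate (n + 1) true) η
  hp3 : ∀ n η, p n (cat (List.replicate (n + 1) true) η) = cat [false] η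

/-- Thompson's group `T`, generated by all `x_s` and all `p_n`. -/
def Tgrp (D : LMData) : Subgroup (Cantor ≃ₜ Cantor) :=
  Subgroup.closure (Set.range D.xx ∪ Set.range D.p)

/-- The group `Ŝ`, generated by all `x_s`, all `y_s` and all `p_n`. -/
def Shat (D : LMData) : Subgroup (Cantor ≃ₜ Cantor) :=
  Subgroup.closure (Set.range D.xx ∪ Set.range D.yy ∪ Set.range D.p)

/-- The homeomorphism `y₁₀ y₁₁₀⁻¹` (right-action word: first `y₁₀`, then `y₁₁₀⁻¹`). -/
def sgen (D : LMData) : Cantor ≃ₜ Cantor :=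
  (D.yy [true, true, false])⁻¹ * D.yy [true, false]

/-- The group `S`, generated by Thompson's group `T` together with `y₁₀ y₁₁₀⁻¹`. -/
def Sgrp (D : LMData) : Subgroup (Cantor ≃ₜ Cantor) :=
  Subgroup.closure (↑(Tgrp D) ∪ {sgen D})

/-- The Lodha–Moore group `_yG_y`, generated by all `x_s` and all `y_s`. -/
def LMgrp (D : LMData) : Subgroup (Cantor ≃ₜ Cantor) :=
  Subgroup.closure (Set.range D.xx ∪ Set.range D.yy)

/-- Two finite binary sequences are independent if neither is a prefix of the other. -/
def Indep (s t : List Bool) : Prop := ¬ s <+: t ∧ ¬ t <+: s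

/-!
For a cone-to-cone map `g`, i.e. `g (s η) = t η` for all `η`, conjugation gives
`y_s = g⁻¹ y_t g`. Hence if some `g ∈ T` sends the cones `s` and `t` to `10` and `110`, then
`y_s y_t⁻¹` is a `T`-conjugate of the generator `y₁₀ y₁₁₀⁻¹` and lies in `S`. Explicit words
in `x_u`, `p₀`, `p₁` do this for every pair of lexicographically adjacent words
`w 0 1^a`, `w 1 0^c` other than `0, 1`. The relation "`y_s y_t⁻¹ ∈ S`" says that `y_s` and `y_t`
have the same left coset modulo `S`, so it is an equivalence relation; walking through the words
of a fixed length `n ≥ 2` in lexicographic order, and moving any nonempty word to one of length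
`n` by one adjacent step, shows that all `y_s` with `s ≠ []` lie in one coset.
-/

theorem cat_append (s t : List Bool) (η : Cantor) : cat (s ++ t) η = cat s (cat t η) := by
  funext n
  simp only [cat, List.length_append, List.get_eq_getElem]
  by_cases h1 : n < s.length
  · rw [dif_pos (by omega), dif_pos h1, List.getElem_append_left h1]
  · by_cases h2 : n < s.length + t.length
    · rw [dif_pos h2, dif_neg h1, dif_pos (by omega), List.getElem_append_right (by omega)]
    · rw [dif_neg h2, dif_neg h1, dif_neg (by omega), Nat.sub_sub]

theorem isPrefix_of_cat_eq_cat {u v : List Bool} {α β : Cantor} (h : cat u α = cat v β)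
    (hle : u.length ≤ v.length) : u <+: v := by
  rw [List.prefix_iff_eq_take]
  refine List.ext_getElem (by simp [hle]) fun i hi _ => ?_
  have := congrFun h i
  simp only [cat, List.get_eq_getElem, dif_pos hi, dif_pos (hi.trans_le hle)] at this
  rw [List.getElem_take, this]

theorem not_isPrefixOf_cat_of_indep {u v : List Bool} (h : Indep u v) (η : Cantor) :
    ¬ IsPrefixOf u (cat v η) := by
  rintro ⟨η', he⟩
  rcases le_total u.length v.length with hle | hle
  · exact h.1 (isPrefix_of_cat_eq_cat he.symm hle)
  · exact h.2 (isPrefix_of_cat_eq_cat he hle)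

def MapsCone (g : Cantor ≃ₜ Cantor) (s t : List Bool) : Prop :=
  ∀ η, g (cat s η) = cat t η

namespace MapsCone

variable {g h : Cantor ≃ₜ Cantor} {s t u : List Bool}

theorem append (hg : MapsCone g s t) (v : List Bool) : MapsCone g (s ++ v) (t ++ v) :=
  fun η => by rw [cat_append, cat_append, hg]

theorem mul (hg : MapsCone g s t) (hh : MapsCone h t u) : MapsCone (h * g) s u :=
  fun η => by rw [homeo_mul_apply, hg, hh]

theorem inv (hg : MapsCone g s t) : MapsCone g⁻¹ t s :=
  fun η => by rw [← hg, homeo_inv_apply, g.symm_apply_apply]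

end MapsCone

namespace LMData

variable (D : LMData)

theorem xx_mem_Tgrp (u : List Bool) : D.xx u ∈ Tgrp D :=
  Subgroup.subset_closure (Or.inl ⟨u, rfl⟩)

theorem p_mem_Tgrp (n : ℕ) : D.p n ∈ Tgrp D :=
  Subgroup.subset_closure (Or.inr ⟨n, rfl⟩)

theorem Tgrp_le_Sgrp : Tgrp D ≤ Sgrp D :=
  fun _ hg => Subgroup.subset_closure (Or.inl hg)

theorem sgen_mem_Sgrp : sgen D ∈ Sgrp D :=
  Subgroup.subset_closure (Or.inr rfl)

theorem mapsCone_xx_false_false (u : List Bool) :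
    MapsCone (D.xx u) (u ++ [false, false]) (u ++ [false]) :=
  fun η => by rw [cat_append, cat_append, D.hxx, D.hx00]

theorem mapsCone_xx_false_true (u : List Bool) :
    MapsCone (D.xx u) (u ++ [false, true]) (u ++ [true, false]) :=
  fun η => by rw [cat_append, cat_append, D.hxx, D.hx01]

theorem mapsCone_xx_true (u : List Bool) :
    MapsCone (D.xx u) (u ++ [true]) (u ++ [true, true]) :=
  fun η => by rw [cat_append, cat_append, D.hxx, D.hx1]

theorem mapsCone_xx_of_indep {u v : List Bool} (h : Indep u v) : MapsCone (D.xx u) v v :=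
  fun η => D.hxx' u _ (not_isPrefixOf_cat_of_indep h η)

theorem mapsCone_p_zero_false : MapsCone (D.p 0) [false] [true] := D.hp2 0

theorem mapsCone_p_zero_true : MapsCone (D.p 0) [true] [false] := D.hp3 0

theorem mapsCone_p_one_false : MapsCone (D.p 1) [false] [true, false] :=
  fun η => D.hp1 1 0 η one_pos

theorem mapsCone_p_one_true_false : MapsCone (D.p 1) [true, false] [true, true] := D.hp2 1

theorem mapsCone_p_one_true_true : MapsCone (D.p 1) [true, true] [false] := D.hp3 1

theorem yy_eq_conj_of_mapsCone {g : Cantor ≃ₜ Cantor} {s t : List Bool} (h : MapsCone g s t) :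
    D.yy s = g⁻¹ * D.yy t * g := by
  refine Homeomorph.ext fun ξ => ?_
  rw [homeo_mul_apply, homeo_mul_apply, homeo_inv_apply, Homeomorph.eq_symm_apply]
  by_cases hs : IsPrefixOf s ξ
  · obtain ⟨η, rfl⟩ := hs
    rw [D.hyy, h, h, D.hyy]
  · have ht : ¬ IsPrefixOf t (g ξ) := by
      rintro ⟨η, he⟩
      refine hs ⟨η, g.injective ?_⟩
      rw [he, h]
    rw [D.hyy' s ξ hs, D.hyy' t _ ht]

def TMovesToSgenCones (s t : List Bool) : Prop :=
  ∃ g ∈ Tgrp D, MapsCone g s [true, false] ∧ MapsCone g t [true, true, false]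

variable {D} in
theorem TMovesToSgenCones.of_mapsCone {g : Cantor ≃ₜ Cantor} {s t s' t' : List Bool}
    (hg : g ∈ Tgrp D) (hs : MapsCone g s s') (ht : MapsCone g t t')
    (h : TMovesToSgenCones D s' t') : TMovesToSgenCones D s t := by
  obtain ⟨f, hf, hfs, hft⟩ := h
  exact ⟨f * g, mul_mem hf hg, hs.mul hfs, ht.mul hft⟩

theorem tMovesToSgenCones_trueFalse_trueTrueFalse :
    TMovesToSgenCones D [true, false] [true, true, false] :=
  ⟨1, one_mem _, fun _ => rfl, fun _ => rfl⟩

theorem tMovesToSgenCones_false_trueFalse : TMovesToSgenCones D [false] [true, false] :=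
  .of_mapsCone (inv_mem (D.xx_mem_Tgrp [true]))
    (D.mapsCone_xx_of_indep (u := [true]) (by simp [Indep])).inv
    (D.mapsCone_xx_false_false [true]).inv <|
  .of_mapsCone (D.p_mem_Tgrp 1) D.mapsCone_p_one_false
    (D.mapsCone_p_one_true_false.append [false]) D.tMovesToSgenCones_trueFalse_trueTrueFalse

theorem tMovesToSgenCones_falseTrue_trueFalse :
    TMovesToSgenCones D [false, true] [true, false] :=
  .of_mapsCone (D.xx_mem_Tgrp []) (D.mapsCone_xx_false_true [])
    ((D.mapsCone_xx_true []).append [false]) D.tMovesToSgenCones_trueFalse_trueTrueFalse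

theorem tMovesToSgenCones_falseTrue_true : TMovesToSgenCones D [false, true] [true] :=
  .of_mapsCone (D.p_mem_Tgrp 0) (D.mapsCone_p_zero_false.append [true])
    D.mapsCone_p_zero_true <|
  .of_mapsCone (D.p_mem_Tgrp 1) D.mapsCone_p_one_true_true D.mapsCone_p_one_false
    D.tMovesToSgenCones_false_trueFalse

variable {D} in
theorem TMovesToSgenCones.false_cons_replicate_true {v : List Bool} (a : ℕ)
    (h : TMovesToSgenCones D [false, true] (true :: v)) :
    TMovesToSgenCones D (false :: List.replicate (a + 1) true) (true :: v) := by
  induction a with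
  | zero => exact h
  | succ a ih =>
    refine .of_mapsCone (inv_mem (D.xx_mem_Tgrp [false])) ?_
      (D.mapsCone_xx_of_indep (by simp [Indep])).inv ih
    simpa [List.replicate_succ] using ((D.mapsCone_xx_true [false]).append
      (List.replicate a true)).inv

variable {D} in
theorem TMovesToSgenCones.true_cons_replicate_false {v : List Bool} (c : ℕ)
    (h : TMovesToSgenCones D (false :: v) [true, false]) :
    TMovesToSgenCones D (false :: v) (true :: List.replicate (c + 1) false) := by
  induction c with
  | zero => exact h
  | succ c ih =>
    refine .of_mapsCone (D.xx_mem_Tgrp [true]) (D.mapsCone_xx_of_indep (by simp [Indep])) ?_ ih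
    simpa [List.replicate_succ] using (D.mapsCone_xx_false_false [true]).append
      (List.replicate c false)

theorem tMovesToSgenCones_false_true (a c : ℕ) (h : a ≠ 0 ∨ c ≠ 0) :
    TMovesToSgenCones D (false :: List.replicate a true) (true :: List.replicate c false) := by
  rcases a with _ | a <;> rcases c with _ | c
  · simp at h
  · exact D.tMovesToSgenCones_false_trueFalse.true_cons_replicate_false c
  · exact D.tMovesToSgenCones_falseTrue_true.false_cons_replicate_true a
  · exact .false_cons_replicate_true a <|
      .true_cons_replicate_false c D.tMovesToSgenCones_falseTrue_trueFalse

/-- Induction on `w` from the right: `x_u` turns `(u00 1^a, u01 0^c)` into `(u0 1^a, u10 0^c)`,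
and `x_u⁻¹` turns `(u10 1^a, u11 0^c)` into `(u01 1^a, u1 0^c)`. -/
theorem tMovesToSgenCones_adjacent (w : List Bool) (a c : ℕ) (h : w ≠ [] ∨ a ≠ 0 ∨ c ≠ 0) :
    TMovesToSgenCones D (w ++ false :: List.replicate a true)
      (w ++ true :: List.replicate c false) := by
  induction w using List.reverseRecOn generalizing a c with
  | nil => simpa using D.tMovesToSgenCones_false_true a c (by simpa using h)
  | append_singleton u b ih =>
    cases b
    · refine .of_mapsCone (D.xx_mem_Tgrp u) ?_ ?_ (ih a (c + 1) (by simp))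
      · simpa using (D.mapsCone_xx_false_false u).append (List.replicate a true)
      · simpa [List.replicate_succ] using
          (D.mapsCone_xx_false_true u).append (List.replicate c false)
    · refine .of_mapsCone (inv_mem (D.xx_mem_Tgrp u)) ?_ ?_ (ih (a + 1) c (by simp))
      · simpa [List.replicate_succ] using
          ((D.mapsCone_xx_false_true u).append (List.replicate a true)).inv
      · simpa using ((D.mapsCone_xx_true u).append (List.replicate c false)).inv

def yClass (s : List Bool) : (Cantor ≃ₜ Cantor) ⧸ Sgrp D := D.yy s

theorem yClass_eq_of_tMovesToSgenCones {s t : List Bool} (h : TMovesToSgenCones D s t) :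
    D.yClass s = D.yClass t := by
  obtain ⟨g, hg, hs, ht⟩ := h
  have hgS := D.Tgrp_le_Sgrp hg
  rw [yClass, yClass, QuotientGroup.eq, D.yy_eq_conj_of_mapsCone hs,
    D.yy_eq_conj_of_mapsCone ht]
  have hconj : (g⁻¹ * D.yy [true, false] * g)⁻¹ * (g⁻¹ * D.yy [true, true, false] * g) =
      g⁻¹ * (sgen D)⁻¹ * g := by
    simp only [sgen]; group
  rw [hconj]
  exact mul_mem (mul_mem (inv_mem hgS) (inv_mem D.sgen_mem_Sgrp)) hgS

theorem yClass_append_eq_replicate_false (n : ℕ) :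
    ∀ w v : List Bool, v.length = n → 2 ≤ w.length + n →
      D.yClass (w ++ v) = D.yClass (w ++ List.replicate n false) := by
  induction n with
  | zero =>
    intro w v hv _
    rw [List.length_eq_zero_iff.mp hv, List.replicate_zero]
  | succ n ih =>
    intro w v hv hn
    obtain ⟨b, v, rfl⟩ := List.exists_cons_of_length_eq_add_one hv
    have hvn : v.length = n := by simpa using hv
    have ih' (b : Bool) (v : List Bool) (hv : v.length = n) :
        D.yClass (w ++ b :: v) = D.yClass (w ++ b :: List.replicate n false) := by
      simpa using ih (w ++ [b]) v hv (by simp; omega)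
    cases b
    · simpa [List.replicate_succ] using ih' false v hvn
    · have hw : w ≠ [] ∨ n ≠ 0 ∨ n ≠ 0 := by cases w <;> simp at hn ⊢; omega
      calc D.yClass (w ++ true :: v) = D.yClass (w ++ true :: List.replicate n false) :=
            ih' true v hvn
        _ = D.yClass (w ++ false :: List.replicate n true) :=
            (D.yClass_eq_of_tMovesToSgenCones (D.tMovesToSgenCones_adjacent w n n hw)).symm
        _ = D.yClass (w ++ List.replicate (n + 1) false) := by
            simpa [List.replicate_succ] using ih' false _ List.length_replicate

theorem yClass_eq_of_length_eq {v v' : List Bool} {n : ℕ} (hv : v.length = n)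
    (hv' : v'.length = n) (hn : 2 ≤ n) : D.yClass v = D.yClass v' := by
  simpa using (D.yClass_append_eq_replicate_false n [] v hv (by simpa)).trans
    (D.yClass_append_eq_replicate_false n [] v' hv' (by simpa)).symm

theorem exists_yClass_eq_of_length_lt {s : List Bool} (hs : s ≠ []) {n : ℕ}
    (hn : s.length < n) : ∃ A : List Bool, A.length = n ∧ D.yClass s = D.yClass A := by
  obtain ⟨u, b, rfl⟩ := (List.eq_nil_or_concat' s).resolve_left hs
  simp only [List.length_append, List.length_singleton] at hn
  have hc : n - u.length - 1 ≠ 0 := by omega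
  cases b
  · refine ⟨u ++ true :: List.replicate (n - u.length - 1) false, by simp; omega, ?_⟩
    simpa using D.yClass_eq_of_tMovesToSgenCones
      (D.tMovesToSgenCones_adjacent u 0 _ (Or.inr (Or.inr hc)))
  · refine ⟨u ++ false :: List.replicate (n - u.length - 1) true, by simp; omega, ?_⟩
    simpa using (D.yClass_eq_of_tMovesToSgenCones
      (D.tMovesToSgenCones_adjacent u _ 0 (Or.inr (Or.inl hc)))).symm

theorem yClass_eq_of_ne_nil {s t : List Bool} (hs : s ≠ []) (ht : t ≠ []) :
    D.yClass s = D.yClass t := by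
  have hs₁ := List.length_pos_of_ne_nil hs
  obtain ⟨A, hA, hsA⟩ := D.exists_yClass_eq_of_length_lt hs
    (n := max s.length t.length + 1) (by omega)
  obtain ⟨B, hB, htB⟩ := D.exists_yClass_eq_of_length_lt ht
    (n := max s.length t.length + 1) (by omega)
  rw [hsA, htB, D.yClass_eq_of_length_eq hA hB (by omega)]

end LMData

/-- for independent `s, t`, the element `y_s y_t⁻¹` (right-action word:
first `y_s`, then `y_t⁻¹`) lies in `S`. -/
theorem statement5 (D : LMData) (s t : List Bool) (h : Indep s t) :
    (D.yy t)⁻¹ * D.yy s ∈ Sgrp D := by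
  have hs : s ≠ [] := by rintro rfl; exact h.1 List.nil_prefix
  have ht : t ≠ [] := by rintro rfl; exact h.2 List.nil_prefix
  exact QuotientGroup.eq.mp (D.yClass_eq_of_ne_nil ht hs)
end

section
/- For all m ≥ 0, n ≥ 1 and integers c_1, …, c_n with c_1 + ⋯ + c_n = 0, the product y_{1^{m+1}0}^{c_1} y_{1^{m+2}0}^{c_2} ⋯ y_{1^{m+n}0}^{c_n} lies in the group S. -/
lemma cat_replicate_apply_of_lt {i k : ℕ} (h : k < i) (η : Cantor) :
    cat (List.replicate i true ++ [false]) η k = true := by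
  have hk : k < (List.replicate i true ++ [false]).length := by simp; omega
  simp only [cat, dif_pos hk, List.get_eq_getElem]
  rw [List.getElem_append_left (by simpa using h)]
  simp

lemma cat_replicate_apply_self (i : ℕ) (η : Cantor) :
    cat (List.replicate i true ++ [false]) η i = false := by
  have hi : i < (List.replicate i true ++ [false]).length := by simp
  simp only [cat, dif_pos hi, List.get_eq_getElem]
  rw [List.getElem_append_right (by simp)]
  simp

lemma not_isPrefixOf_cat_replicate {i j : ℕ} (hij : i ≠ j) (η : Cantor) :
    ¬ IsPrefixOf (List.replicate j true ++ [false])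
      (cat (List.replicate i true ++ [false]) η) := by
  rintro ⟨ζ, hζ⟩
  rcases hij.lt_or_gt with h | h
  · simpa [cat_replicate_apply_self, cat_replicate_apply_of_lt h] using congrFun hζ i
  · simpa [cat_replicate_apply_self, cat_replicate_apply_of_lt h] using congrFun hζ j

namespace LMData

variable (D : LMData)

/-- `y_{1^k 0}`. -/
def yOnesZero (k : ℕ) : Cantor ≃ₜ Cantor :=
  D.yy (List.replicate k true ++ [false])

lemma yOnesZero_apply_cat (k : ℕ) (η : Cantor) :
    D.yOnesZero k (cat (List.replicate k true ++ [false]) η) =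
      cat (List.replicate k true ++ [false]) (D.y η) :=
  D.hyy _ η

lemma yOnesZero_apply_of_not_isPrefixOf {k : ℕ} {ξ : Cantor}
    (h : ¬ IsPrefixOf (List.replicate k true ++ [false]) ξ) : D.yOnesZero k ξ = ξ :=
  D.hyy' _ _ h

lemma yOnesZero_apply_of_ne {i j : ℕ} (hij : i ≠ j) (η : Cantor) :
    D.yOnesZero j (cat (List.replicate i true ++ [false]) η) =
      cat (List.replicate i true ++ [false]) η :=
  D.yOnesZero_apply_of_not_isPrefixOf (not_isPrefixOf_cat_replicate hij η)

/-- The supports of `y_{1^i 0}` and `y_{1^j 0}` are the disjoint cylinders `1^i 0` and `1^j 0`. -/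
lemma yOnesZero_commute (i j : ℕ) : Commute (D.yOnesZero i) (D.yOnesZero j) := by
  rcases eq_or_ne i j with rfl | hij
  · exact Commute.refl _
  refine Homeomorph.ext fun ξ => ?_
  show D.yOnesZero i (D.yOnesZero j ξ) = D.yOnesZero j (D.yOnesZero i ξ)
  by_cases hi : IsPrefixOf (List.replicate i true ++ [false]) ξ
  · obtain ⟨η, rfl⟩ := hi
    rw [D.yOnesZero_apply_of_ne hij, D.yOnesZero_apply_cat, D.yOnesZero_apply_of_ne hij]
  by_cases hj : IsPrefixOf (List.replicate j true ++ [false]) ξ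
  · obtain ⟨η, rfl⟩ := hj
    rw [D.yOnesZero_apply_of_ne hij.symm, D.yOnesZero_apply_cat, D.yOnesZero_apply_of_ne hij.symm]
  · simp only [D.yOnesZero_apply_of_not_isPrefixOf hi, D.yOnesZero_apply_of_not_isPrefixOf hj]

/-- `p_n` maps the cylinder `1^j 0` onto `1^{j+1} 0` for `j < n`. -/
lemma p_mul_yOnesZero_mul_inv {n j : ℕ} (hj : j < n) :
    D.p n * D.yOnesZero j * (D.p n)⁻¹ = D.yOnesZero (j + 1) := by
  have hp : ∀ η, D.p n (cat (List.replicate j true ++ [false]) η) =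
      cat (List.replicate (j + 1) true ++ [false]) η := fun η => D.hp1 n j η hj
  refine Homeomorph.ext fun ξ => ?_
  simp only [homeo_mul_apply, homeo_inv_apply]
  by_cases h : IsPrefixOf (List.replicate (j + 1) true ++ [false]) ξ
  · obtain ⟨η, rfl⟩ := h
    rw [D.yOnesZero_apply_cat, ← hp, Homeomorph.symm_apply_apply, D.yOnesZero_apply_cat, hp]
  · have h' : ¬ IsPrefixOf (List.replicate j true ++ [false]) ((D.p n).symm ξ) := by
      rintro ⟨η, hη⟩
      exact h ⟨η, by rw [← hp, ← hη, Homeomorph.apply_symm_apply]⟩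
    rw [D.yOnesZero_apply_of_not_isPrefixOf h', Homeomorph.apply_symm_apply,
      D.yOnesZero_apply_of_not_isPrefixOf h]

lemma p_mem_Sgrp (n : ℕ) : D.p n ∈ Sgrp D :=
  Subgroup.subset_closure (Or.inl (Subgroup.subset_closure (Or.inr ⟨n, rfl⟩)))

lemma yOnesZero_inv_mul_yOnesZero_mem_Sgrp (k : ℕ) :
    (D.yOnesZero (k + 2))⁻¹ * D.yOnesZero (k + 1) ∈ Sgrp D := by
  induction k with
  | zero => exact Subgroup.subset_closure (Or.inr rfl) -- the generator `sgen D`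
  | succ k ih =>
    have hconj := Subgroup.mul_mem _ (Subgroup.mul_mem _ (D.p_mem_Sgrp (k + 3)) ih)
      (Subgroup.inv_mem _ (D.p_mem_Sgrp (k + 3)))
    have hsplit : ∀ a b c : Cantor ≃ₜ Cantor,
        a * (b⁻¹ * c) * a⁻¹ = (a * b * a⁻¹)⁻¹ * (a * c * a⁻¹) := by
      intros; group
    rwa [hsplit, D.p_mul_yOnesZero_mul_inv (by omega), D.p_mul_yOnesZero_mul_inv (by omega)]
      at hconj

end LMData

namespace Subgroup

variable {G : Type*} [Group G] (H : Subgroup G)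

lemma inv_mul_mem_of_forall_succ {g : ℕ → G} (hg : ∀ k, (g (k + 1))⁻¹ * g k ∈ H)
    (k : ℕ) :
    (g 0)⁻¹ * g k ∈ H := by
  induction k with
  | zero => simp
  | succ k ih =>
    have := H.mul_mem ih (H.inv_mem (hg k))
    rwa [mul_inv_rev, inv_inv, mul_assoc, mul_inv_cancel_left] at this

lemma inv_zpow_sum_mul_prod_ofFn_mem {b : G} {g : ℕ → G} (hcomm : ∀ k, Commute b (g k))
    (hmem : ∀ k, b⁻¹ * g k ∈ H) {n : ℕ} (c : Fin n → ℤ) :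
    (b ^ ∑ i, c i)⁻¹ * (List.ofFn fun i : Fin n => g i ^ c i).reverse.prod ∈ H := by
  induction n with
  | zero => simp
  | succ n ih =>
    rw [List.ofFn_succ', List.concat_eq_append, List.reverse_concat', List.prod_cons,
      Fin.sum_univ_castSucc]
    simp only [Fin.val_castSucc, Fin.val_last]
    have hsplit : ∀ (S x : ℤ) (P : G),
        (b ^ (S + x))⁻¹ * (g n ^ x * P) = (b⁻¹ * g n) ^ x * ((b ^ S)⁻¹ * P) := by
      intros
      rw [(hcomm n).inv_left.mul_zpow, inv_zpow, zpow_add, mul_inv_rev, mul_assoc,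
        ((hcomm n).zpow_zpow _ _).inv_left.left_comm, mul_assoc]
    rw [hsplit]
    exact H.mul_mem (H.zpow_mem (hmem n) _) (ih _)

lemma prod_ofFn_zpow_mem_of_sum_eq_zero {b : G} {g : ℕ → G} (hcomm : ∀ k, Commute b (g k))
    (hmem : ∀ k, b⁻¹ * g k ∈ H) {n : ℕ} (c : Fin n → ℤ) (hc : ∑ i, c i = 0) :
    (List.ofFn fun i : Fin n => g i ^ c i).reverse.prod ∈ H := by
  simpa [hc] using H.inv_zpow_sum_mul_prod_ofFn_mem hcomm hmem c

end Subgroup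

theorem statement6_general (D : LMData) (m n : ℕ) (c : Fin n → ℤ)
    (hc : ∑ i, c i = 0) :
    (List.ofFn fun i : Fin n =>
        (D.yy (List.replicate (m + 1 + (i : ℕ)) true ++ [false])) ^ (c i)).reverse.prod
      ∈ Sgrp D := by
  have hstep : ∀ k, (D.yOnesZero (m + 1 + (k + 1)))⁻¹ * D.yOnesZero (m + 1 + k) ∈ Sgrp D :=
    fun k => by
      rw [show m + 1 + (k + 1) = m + k + 2 by omega, show m + 1 + k = m + k + 1 by omega]
      exact D.yOnesZero_inv_mul_yOnesZero_mem_Sgrp (m + k)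
  exact (Sgrp D).prod_ofFn_zpow_mem_of_sum_eq_zero (g := fun k => D.yOnesZero (m + 1 + k))
    (fun k => D.yOnesZero_commute _ _) ((Sgrp D).inv_mul_mem_of_forall_succ hstep) c hc

/-- a product `y_{1^{m+1}0}^{c₁} ⋯ y_{1^{m+n}0}^{cₙ}` with exponent sum `0`
lies in `S` (right-action word, hence the reversed product in composition order). -/
theorem statement6 (D : LMData) (m n : ℕ) (hn : 1 ≤ n) (c : Fin n → ℤ)
    (hc : ∑ i, c i = 0) :
    (List.ofFn fun i : Fin n =>
        (D.yy (List.replicate (m + 1 + (i : ℕ)) true ++ [false])) ^ (c i)).reverse.prod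
      ∈ Sgrp D :=
  statement6_general D m n c hc
end
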